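/- (Commutation of smoothing and differentiation) Define 𝓛_λ^{(d)} g(α) := E_{z∼Unif(S^{d−2})}[g((α + λ z_1 √(1−α²))/√(1+λ²))]. Then for twice-differentiable g, (d/dα) 𝓛_λ^{(d)}(g(α)) = 𝓛_λ^{(d)}(g'(α))/√(1+λ²) − (λ²α/((1+λ²)(d−1))) · 𝓛_λ^{(d+2)}(g''(α)). -/

import Mathlib

open MeasureTheory

noncomputable def sphereMarginal (d : ℕ) : Measure ℝ :=
  (volume.restrict (Set.Ioo (-1 : ℝ) 1)).withDensity fun x =>
    ENNReal.ofReal ((1 - x ^ 2) ^ (((d : ℝ) - 3) / 2) *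
      (Real.Gamma ((d : ℝ) / 2) / (Real.sqrt Real.pi * Real.Gamma (((d : ℝ) - 1) / 2))))

/-!
Differentiate under the integral sign: on a compact neighbourhood of `α` inside `(-1, 1)` the
`a`-derivative of the integrand is bounded uniformly in `t ∈ [-1, 1]`. The chain rule gives the
integrand `g'(u) (1 - λ t α / √(1 - α²)) / √(1 + λ²)`, and the part carrying the factor `t` is
turned into an integral of `g''` by the Stein identity `E_n[t h(t)] = E_{n+2}[h'(t)] / n` for the
first-coordinate marginal of the sphere in `ℝⁿ`. That identity is integration by parts against
the density `∝ (1 - t²)^((n-3)/2)`: the boundary term `(1 - t²)^((n-1)/2) h(t)` vanishes at `±1`,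
and `Γ(s + 1) = s Γ(s)` relates the normalising constants in dimensions `n` and `n + 2`.
-/

open Set Filter Topology Metric

theorem one_sub_sq_pos {x : ℝ} (hx : x ∈ Ioo (-1 : ℝ) 1) : 0 < 1 - x ^ 2 := by
  nlinarith [hx.1, hx.2]

theorem integrableOn_one_sub_sq_rpow {q : ℝ} (hq : -(1 / 2) ≤ q) :
    IntegrableOn (fun x : ℝ => (1 - x ^ 2) ^ q) (Ioo (-1) 1) := by
  have hcont : ContinuousOn (fun x : ℝ => (1 - x ^ 2) ^ q) (Ioo (-1) 1) :=
    ContinuousOn.rpow_const (by fun_prop) fun x hx => Or.inl (one_sub_sq_pos hx).ne'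
  -- `(1 - x²)^(-1/2)` is the derivative of `arcsin`, hence integrable, and it dominates.
  have hhalf : IntegrableOn (fun x : ℝ => (1 - x ^ 2) ^ (-(1 / 2) : ℝ)) (Ioo (-1) 1) := by
    refine (intervalIntegral.integrableOn_deriv_of_nonneg Real.continuous_arcsin.continuousOn
      (fun x hx => ?_) fun x hx => (Real.rpow_pos_of_pos (one_sub_sq_pos hx) _).le).mono_set
      Ioo_subset_Ioc_self
    convert Real.hasDerivAt_arcsin hx.1.ne' hx.2.ne using 1
    rw [Real.rpow_neg (one_sub_sq_pos hx).le, Real.sqrt_eq_rpow, one_div, one_div]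
  refine hhalf.mono' (hcont.aestronglyMeasurable measurableSet_Ioo) ?_
  filter_upwards [ae_restrict_mem measurableSet_Ioo] with x hx
  rw [Real.norm_of_nonneg (Real.rpow_nonneg (one_sub_sq_pos hx).le _)]
  exact Real.rpow_le_rpow_of_exponent_ge (one_sub_sq_pos hx) (by nlinarith) hq

theorem integral_mul_one_sub_sq_rpow {p : ℝ} (hp : 1 / 2 ≤ p) {h h' : ℝ → ℝ}
    (hh : ∀ x, HasDerivAt h (h' x) x) (hh' : Continuous h') :
    (2 * p) * ∫ x in Ioo (-1 : ℝ) 1, (1 - x ^ 2) ^ (p - 1) * (x * h x) =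
      ∫ x in Ioo (-1 : ℝ) 1, (1 - x ^ 2) ^ p * h' x := by
  have hcont : Continuous h := continuous_iff_continuousAt.2 fun x => (hh x).continuousAt
  have hp0 : 0 < p := by linarith
  have hcontp : Continuous fun x : ℝ => (1 - x ^ 2) ^ p :=
    (Real.continuous_rpow_const hp0.le).comp (by fun_prop)
  have hint₁ : IntegrableOn (fun x => (1 - x ^ 2) ^ (p - 1) * (x * h x)) (Ioo (-1) 1) :=
    (integrableOn_one_sub_sq_rpow (by linarith)).mul_continuousOn_of_subset
      (by fun_prop) measurableSet_Ioo isCompact_Icc Ioo_subset_Icc_self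
  have hint₂ : IntegrableOn (fun x => (1 - x ^ 2) ^ p * h' x) (Ioo (-1) 1) :=
    (hcontp.mul hh').continuousOn.integrableOn_compact isCompact_Icc |>.mono_set
      Ioo_subset_Icc_self
  -- `(1 - x²)^p h` vanishes at `±1`, so its derivative integrates to zero.
  have hftc : ∫ x in (-1 : ℝ)..1,
      (-(2 * p) * ((1 - x ^ 2) ^ (p - 1) * (x * h x)) + (1 - x ^ 2) ^ p * h' x) = 0 := by
    rw [intervalIntegral.integral_eq_sub_of_hasDerivAt_of_le (f := fun x => (1 - x ^ 2) ^ p * h x)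
      (by norm_num) (hcontp.mul hcont).continuousOn]
    · norm_num [Real.zero_rpow hp0.ne']
    · intro x hx
      have := (((hasDerivAt_pow 2 x).const_sub 1).rpow_const (p := p)
        (Or.inl (one_sub_sq_pos hx).ne')).mul (hh x)
      exact this.congr_deriv (by simp only [Nat.cast_ofNat]; ring)
    · rw [intervalIntegrable_iff_integrableOn_Ioo_of_le (by norm_num)]
      exact (hint₁.const_mul _).add hint₂
  rw [intervalIntegral.integral_of_le (by norm_num), integral_Ioc_eq_integral_Ioo,
    integral_add (hint₁.const_mul _) hint₂, integral_const_mul] at hftc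
  linarith

theorem Continuous.integrable_of_ae_mem_compact {μ : Measure ℝ} [IsFiniteMeasure μ] {K : Set ℝ}
    (hK : IsCompact K) (hμK : ∀ᵐ t ∂μ, t ∈ K) {f : ℝ → ℝ} (hf : Continuous f) :
    Integrable f μ := by
  rw [← Measure.restrict_eq_self_of_ae_mem hμK]
  exact hf.continuousOn.integrableOn_compact hK

theorem hasDerivAt_integral_of_continuousOn {μ : Measure ℝ} [IsFiniteMeasure μ] {K U : Set ℝ}
    (hK : IsCompact K) (hμK : ∀ᵐ t ∂μ, t ∈ K) {F F' : ℝ → ℝ → ℝ} {x₀ : ℝ} (hU : U ∈ 𝓝 x₀)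
    (hF : ∀ x ∈ U, Continuous (F x)) (hF' : ContinuousOn (Function.uncurry F') (U ×ˢ univ))
    (hderiv : ∀ x ∈ U, ∀ t, HasDerivAt (F · t) (F' x t) x) :
    HasDerivAt (fun x => ∫ t, F x t ∂μ) (∫ t, F' x₀ t ∂μ) x₀ := by
  obtain ⟨ε, hε, hεU⟩ := nhds_basis_closedBall.mem_iff.mp hU
  obtain ⟨C, hC⟩ := ((isCompact_closedBall x₀ ε).prod hK).exists_bound_of_continuousOn
    (hF'.mono (prod_mono hεU (subset_univ K)))
  have hF'x₀ : Continuous (F' x₀) :=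
    hF'.comp_continuous (Continuous.prodMk_right x₀) fun t => ⟨mem_of_mem_nhds hU, trivial⟩
  refine (hasDerivAt_integral_of_dominated_loc_of_deriv_le (closedBall_mem_nhds x₀ hε)
    (eventually_of_mem hU fun x hx => (hF x hx).aestronglyMeasurable)
    ((hF x₀ (mem_of_mem_nhds hU)).integrable_of_ae_mem_compact hK hμK)
    hF'x₀.aestronglyMeasurable ?_ (integrable_const C) ?_).2
  · filter_upwards [hμK] with t ht x hx using hC (x, t) ⟨hx, ht⟩
  · exact ae_of_all _ fun t x hx => hderiv x (hεU hx) t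

noncomputable def sphereMarginalConst (n : ℕ) : ℝ :=
  Real.Gamma ((n : ℝ) / 2) / (Real.sqrt Real.pi * Real.Gamma (((n : ℝ) - 1) / 2))

theorem sphereMarginalConst_pos {n : ℕ} (hn : 2 ≤ n) : 0 < sphereMarginalConst n := by
  have hn' : (2 : ℝ) ≤ n := by exact_mod_cast hn
  unfold sphereMarginalConst
  have := Real.Gamma_pos_of_pos (by linarith : (0 : ℝ) < ((n : ℝ) - 1) / 2)
  have := Real.Gamma_pos_of_pos (by linarith : (0 : ℝ) < (n : ℝ) / 2)
  positivity

theorem sphereMarginalConst_add_two {n : ℕ} (hn : 2 ≤ n) :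
    sphereMarginalConst (n + 2) * ((n : ℝ) - 1) = sphereMarginalConst n * n := by
  have hn' : (2 : ℝ) ≤ n := by exact_mod_cast hn
  have hn1 : (n : ℝ) - 1 ≠ 0 := by linarith
  unfold sphereMarginalConst
  rw [show ((n + 2 : ℕ) : ℝ) / 2 = (n : ℝ) / 2 + 1 by push_cast; ring,
    show (((n + 2 : ℕ) : ℝ) - 1) / 2 = ((n : ℝ) - 1) / 2 + 1 by push_cast; ring,
    Real.Gamma_add_one (by positivity), Real.Gamma_add_one (by linarith)]
  field_simp

theorem sphereMarginal_eq_withDensity (n : ℕ) :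
    sphereMarginal n = (volume.restrict (Ioo (-1 : ℝ) 1)).withDensity fun x =>
      ENNReal.ofReal ((1 - x ^ 2) ^ (((n : ℝ) - 3) / 2) * sphereMarginalConst n) :=
  rfl

theorem isFiniteMeasure_sphereMarginal {n : ℕ} (hn : 2 ≤ n) :
    IsFiniteMeasure (sphereMarginal n) := by
  have hn' : (2 : ℝ) ≤ n := by exact_mod_cast hn
  exact isFiniteMeasure_withDensity_ofReal
    ((integrableOn_one_sub_sq_rpow (by linarith)).mul_const _).hasFiniteIntegral

theorem ae_mem_Ioo_sphereMarginal (n : ℕ) : ∀ᵐ t ∂(sphereMarginal n), t ∈ Ioo (-1 : ℝ) 1 :=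
  (withDensity_absolutelyContinuous _ _).ae_le (ae_restrict_mem measurableSet_Ioo)

theorem integral_sphereMarginal {n : ℕ} (hn : 2 ≤ n) (f : ℝ → ℝ) :
    ∫ t, f t ∂(sphereMarginal n) =
      sphereMarginalConst n * ∫ t in Ioo (-1 : ℝ) 1, (1 - t ^ 2) ^ (((n : ℝ) - 3) / 2) * f t := by
  rw [sphereMarginal_eq_withDensity, integral_withDensity_eq_integral_toReal_smul (by fun_prop)
    (ae_of_all _ fun _ => ENNReal.ofReal_lt_top), ← integral_const_mul]
  refine setIntegral_congr_fun measurableSet_Ioo fun x hx => ?_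
  rw [smul_eq_mul, ENNReal.toReal_ofReal (mul_nonneg (Real.rpow_nonneg (one_sub_sq_pos hx).le _)
    (sphereMarginalConst_pos hn).le)]
  ring

theorem integral_mul_sphereMarginal {n : ℕ} (hn : 2 ≤ n) {h h' : ℝ → ℝ}
    (hh : ∀ x, HasDerivAt h (h' x) x) (hh' : Continuous h') :
    ∫ t, t * h t ∂(sphereMarginal n) = (∫ t, h' t ∂(sphereMarginal (n + 2))) / n := by
  have hn' : (2 : ℝ) ≤ n := by exact_mod_cast hn
  have hibp := integral_mul_one_sub_sq_rpow (p := ((n : ℝ) - 1) / 2) (by linarith) hh hh'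
  rw [integral_sphereMarginal hn, integral_sphereMarginal (by omega)]
  push_cast
  rw [show ((n : ℝ) + 2 - 3) / 2 = ((n : ℝ) - 1) / 2 by ring, ← hibp,
    show ((n : ℝ) - 1) / 2 - 1 = ((n : ℝ) - 3) / 2 by ring]
  have hn0 : (n : ℝ) ≠ 0 := by positivity
  rw [eq_div_iff hn0]
  linear_combination (∫ t in Ioo (-1 : ℝ) 1, (1 - t ^ 2) ^ (((n : ℝ) - 3) / 2) * (t * h t)) *
    (sphereMarginalConst_add_two hn).symm

/-- `𝓛_λ^{(d)} g(a) = ∫ g (smoothingArg lam a t) ∂(sphereMarginal (d - 1))`. -/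
noncomputable def smoothingArg (lam a t : ℝ) : ℝ :=
  (a + lam * t * Real.sqrt (1 - a ^ 2)) / Real.sqrt (1 + lam ^ 2)

theorem continuous_smoothingArg (lam : ℝ) : Continuous (Function.uncurry (smoothingArg lam)) := by
  unfold smoothingArg
  fun_prop

theorem hasDerivAt_smoothingArg_left (lam t : ℝ) {a : ℝ} (ha : a ∈ Ioo (-1 : ℝ) 1) :
    HasDerivAt (smoothingArg lam · t)
      ((1 - lam * t * a / Real.sqrt (1 - a ^ 2)) / Real.sqrt (1 + lam ^ 2)) a := by
  have hsqrt : HasDerivAt (fun a : ℝ => Real.sqrt (1 - a ^ 2)) (-a / Real.sqrt (1 - a ^ 2)) a := by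
    convert ((hasDerivAt_pow 2 a).const_sub 1).sqrt (one_sub_sq_pos ha).ne' using 1
    field_simp
    ring
  exact (((hasDerivAt_id' a).add (hsqrt.const_mul (lam * t))).div_const _).congr_deriv (by ring)

theorem hasDerivAt_smoothingArg_right (lam a t : ℝ) :
    HasDerivAt (smoothingArg lam a) (lam * Real.sqrt (1 - a ^ 2) / Real.sqrt (1 + lam ^ 2)) t :=
  ((((hasDerivAt_id' t).const_mul lam).mul_const _).const_add a).div_const _
    |>.congr_deriv (by ring)

theorem hasDerivAt_integral_comp_smoothingArg {μ : Measure ℝ} [IsFiniteMeasure μ] {K : Set ℝ}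
    (hK : IsCompact K) (hμK : ∀ᵐ t ∂μ, t ∈ K) (lam : ℝ) {g : ℝ → ℝ} (hg : ContDiff ℝ 1 g)
    {α : ℝ} (hα : α ∈ Ioo (-1 : ℝ) 1) :
    HasDerivAt (fun a => ∫ t, g (smoothingArg lam a t) ∂μ)
      ((∫ t, deriv g (smoothingArg lam α t) ∂μ) / Real.sqrt (1 + lam ^ 2) -
        lam * α / (Real.sqrt (1 + lam ^ 2) * Real.sqrt (1 - α ^ 2)) *
          ∫ t, t * deriv g (smoothingArg lam α t) ∂μ) α := by
  have hu := continuous_smoothingArg lam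
  have hg' : Continuous (deriv g) := hg.continuous_deriv le_rfl
  have hint : Integrable (fun t => deriv g (smoothingArg lam α t)) μ :=
    (hg'.comp (hu.uncurry_left α)).integrable_of_ae_mem_compact hK hμK
  have hint_mul : Integrable (fun t => t * deriv g (smoothingArg lam α t)) μ :=
    (continuous_id.mul (hg'.comp (hu.uncurry_left α))).integrable_of_ae_mem_compact hK hμK
  have hF' : ContinuousOn (Function.uncurry fun a t =>
      deriv g (smoothingArg lam a t) * ((1 - lam * t * a / Real.sqrt (1 - a ^ 2)) /
        Real.sqrt (1 + lam ^ 2))) (Ioo (-1 : ℝ) 1 ×ˢ univ) :=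
    (hg'.comp hu).continuousOn.mul (ContinuousOn.div_const (continuousOn_const.sub
      (ContinuousOn.div (by fun_prop) (by fun_prop) fun p hp =>
        (Real.sqrt_pos.2 (one_sub_sq_pos hp.1)).ne')) _)
  refine (hasDerivAt_integral_of_continuousOn hK hμK (isOpen_Ioo.mem_nhds hα)
    (fun a _ => hg.continuous.comp (hu.uncurry_left a)) hF'
    fun a ha t => (hg.differentiable one_ne_zero _).hasDerivAt.comp a
      (hasDerivAt_smoothingArg_left lam t ha)).congr_deriv ?_
  rw [← integral_div, ← integral_const_mul,
    ← integral_sub (hint.div_const _) (hint_mul.const_mul _)]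
  congr 1 with t
  ring

theorem integral_mul_comp_smoothingArg {n : ℕ} (hn : 2 ≤ n) (lam a : ℝ) {f : ℝ → ℝ}
    (hf : ContDiff ℝ 1 f) :
    ∫ t, t * f (smoothingArg lam a t) ∂(sphereMarginal n) =
      (∫ t, deriv f (smoothingArg lam a t) ∂(sphereMarginal (n + 2))) *
        (lam * Real.sqrt (1 - a ^ 2) / Real.sqrt (1 + lam ^ 2)) / n := by
  rw [integral_mul_sphereMarginal hn (h := fun t => f (smoothingArg lam a t))
    (fun t => (hf.differentiable one_ne_zero _).hasDerivAt.comp t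
      (hasDerivAt_smoothingArg_right lam a t))
    (((hf.continuous_deriv le_rfl).comp ((continuous_smoothingArg lam).uncurry_left a)).mul
      continuous_const), integral_mul_const]

theorem smoothing_deriv_commute_general (d : ℕ) (hd : 3 ≤ d) (lam : ℝ)
    (g : ℝ → ℝ) (hg : ContDiff ℝ 2 g) (α : ℝ) (hα : α ∈ Set.Ioo (-1 : ℝ) 1) :
    HasDerivAt
      (fun a => ∫ t, g ((a + lam * t * Real.sqrt (1 - a ^ 2)) / Real.sqrt (1 + lam ^ 2))
        ∂(sphereMarginal (d - 1)))
      ((∫ t, deriv g ((α + lam * t * Real.sqrt (1 - α ^ 2)) / Real.sqrt (1 + lam ^ 2))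
          ∂(sphereMarginal (d - 1))) / Real.sqrt (1 + lam ^ 2) -
        lam ^ 2 * α / ((1 + lam ^ 2) * ((d : ℝ) - 1)) *
          ∫ t, deriv (deriv g) ((α + lam * t * Real.sqrt (1 - α ^ 2)) / Real.sqrt (1 + lam ^ 2))
            ∂(sphereMarginal (d + 1))) α := by
  have hd' : 2 ≤ d - 1 := by omega
  have := isFiniteMeasure_sphereMarginal hd'
  have hstein := integral_mul_comp_smoothingArg hd' lam α hg.deriv'
  rw [show d - 1 + 2 = d + 1 by omega, Nat.cast_sub (by omega : 1 ≤ d), Nat.cast_one] at hstein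
  refine (hasDerivAt_integral_comp_smoothingArg isCompact_Icc
    ((ae_mem_Ioo_sphereMarginal _).mono fun t ht => Ioo_subset_Icc_self ht) lam
    (hg.of_le one_le_two) hα).congr_deriv ?_
  have hs : 0 < Real.sqrt (1 - α ^ 2) := Real.sqrt_pos.2 (one_sub_sq_pos hα)
  have hr : Real.sqrt (1 + lam ^ 2) ^ 2 = 1 + lam ^ 2 := Real.sq_sqrt (by positivity)
  have hd1 : (d : ℝ) - 1 ≠ 0 := by
    have : (3 : ℝ) ≤ d := by exact_mod_cast hd
    linarith
  rw [hstein]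
  unfold smoothingArg
  generalize (∫ t, deriv g _ ∂sphereMarginal (d - 1)) = A
  generalize (∫ t, deriv (deriv g) _ ∂sphereMarginal (d + 1)) = B
  field_simp
  linear_combination lam ^ 2 * α * B * hr

/-- Commutation of smoothing and differentiation:
`(d/dα) 𝓛_λ^{(d)}(g)(α) = 𝓛_λ^{(d)}(g')(α)/√(1+λ²)
   − (λ²α/((1+λ²)(d−1))) 𝓛_λ^{(d+2)}(g'')(α)`,
where `𝓛_λ^{(d)} g(α) = E_{z∼S^{d-2}}[g((α+λz_1√(1-α²))/√(1+λ²))]`. -/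
theorem smoothing_deriv_commute (d : ℕ) (hd : 3 ≤ d) (lam : ℝ) (hlam : 0 < lam)
    (g : ℝ → ℝ) (hg : ContDiff ℝ 2 g) (α : ℝ) (hα : α ∈ Set.Ioo (-1 : ℝ) 1) :
    HasDerivAt
      (fun a => ∫ t, g ((a + lam * t * Real.sqrt (1 - a ^ 2)) / Real.sqrt (1 + lam ^ 2))
        ∂(sphereMarginal (d - 1)))
      ((∫ t, deriv g ((α + lam * t * Real.sqrt (1 - α ^ 2)) / Real.sqrt (1 + lam ^ 2))
          ∂(sphereMarginal (d - 1))) / Real.sqrt (1 + lam ^ 2) -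
        lam ^ 2 * α / ((1 + lam ^ 2) * ((d : ℝ) - 1)) *
          ∫ t, deriv (deriv g) ((α + lam * t * Real.sqrt (1 - α ^ 2)) / Real.sqrt (1 + lam ^ 2))
            ∂(sphereMarginal (d + 1))) α :=
  smoothing_deriv_commute_general d hd lam g hg α hα
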